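/- Let (A,j)_K be a C*-net bundle over a pathwise connected poset K and fix o ∈ K. The map ω ↦ ω_o is a bijection from the set of states of (A,j)_K onto the set of invariant states of the holonomy dynamical system (A_o, π₁ᵒ(K), j_*), i.e. states φ of A_o with φ ∘ j_p = φ for every loop p at o. -/

import Mathlib

noncomputable section

universe u v w u' v' w' u'' v'' w''

namespace AQFT

/-! ### Simplices and paths in a poset -/

structure Simplex1 (K : Type u) [PartialOrder K] : Type u where
  supp : K
  d0 : K
  d1 : K
  le0 : d0 ≤ supp
  le1 : d1 ≤ supp

namespace Simplex1

variable {K : Type u} [PartialOrder K]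

def op (s : Simplex1 K) : Simplex1 K := ⟨s.supp, s.d1, s.d0, s.le1, s.le0⟩

def deg (a : K) : Simplex1 K := ⟨a, a, a, le_rfl, le_rfl⟩

def map {L : Type u'} [PartialOrder L] (f : K →o L) (s : Simplex1 K) : Simplex1 L :=
  ⟨f s.supp, f s.d0, f s.d1, f.monotone s.le0, f.monotone s.le1⟩

end Simplex1

structure Simplex2 (K : Type u) [PartialOrder K] : Type u where
  supp : K
  d0 : Simplex1 K
  d1 : Simplex1 K
  d2 : Simplex1 K
  le0 : d0.supp ≤ supp
  le1 : d1.supp ≤ supp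
  le2 : d2.supp ≤ supp
  h00 : d0.d0 = d1.d0
  h11 : d1.d1 = d2.d1
  h10 : d0.d1 = d2.d0

inductive SPath (K : Type u) [PartialOrder K] : K → K → Type u
  | nil (a : K) : SPath K a a
  | cons {a b c : K} (p : SPath K a b) (s : Simplex1 K) (h1 : s.d1 = b) (h0 : s.d0 = c) :
      SPath K a c

namespace SPath

variable {K : Type u} [PartialOrder K]

/-- The path consisting of a single 1-simplex. -/
def single {a b : K} (s : Simplex1 K) (h1 : s.d1 = a) (h0 : s.d0 = b) : SPath K a b :=
  .cons (.nil a) s h1 h0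

/-- Composition of paths: first traverse `p`, then `q`. -/
def comp {a b : K} (p : SPath K a b) : {c : K} → SPath K b c → SPath K a c
  | _, .nil _ => p
  | _, .cons q s h1 h0 => .cons (p.comp q) s h1 h0

/-- The opposite (reverse) of a path. -/
def reverse {a : K} : {b : K} → SPath K a b → SPath K b a
  | _, .nil _ => .nil a
  | _, .cons p s h1 h0 => (single s.op h0 h1).comp p.reverse

@[simp] theorem comp_nil {a b : K} (p : SPath K a b) : p.comp (.nil b) = p := rfl

@[simp] theorem nil_comp {a b : K} (p : SPath K a b) : (SPath.nil a).comp p = p := by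
  induction p with
  | nil => rfl
  | cons p s h1 h0 ih =>
      show SPath.cons ((SPath.nil _).comp p) s h1 h0 = _
      rw [ih]

theorem comp_assoc {a b c d : K} (p : SPath K a b) (q : SPath K b c) (r : SPath K c d) :
    (p.comp q).comp r = p.comp (q.comp r) := by
  induction r with
  | nil => rfl
  | cons r s h1 h0 ih =>
      show SPath.cons ((p.comp q).comp r) s h1 h0 = SPath.cons (p.comp (q.comp r)) s h1 h0
      rw [ih]

/-- All 1-simplices of the path have support `≤ o`. -/
def SuppLE (o : K) {a : K} : {b : K} → SPath K a b → Prop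
  | _, .nil _ => True
  | _, .cons p s _ _ => SuppLE o p ∧ s.supp ≤ o

/-- All supports and faces of the path belong to `P`. -/
def MemAll (P : Set K) {a : K} : {b : K} → SPath K a b → Prop
  | _, .nil _ => True
  | _, .cons p s _ _ => MemAll P p ∧ s.supp ∈ P ∧ s.d0 ∈ P ∧ s.d1 ∈ P

theorem SuppLE.comp {o : K} {a b c : K} {p : SPath K a b} {q : SPath K b c}
    (hp : SuppLE o p) (hq : SuppLE o q) : SuppLE o (p.comp q) := by
  induction q with
  | nil => exact hp
  | cons q s h1 h0 ih => exact ⟨ih hq.1, hq.2⟩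

theorem SuppLE.reverse {o : K} {a b : K} {p : SPath K a b} (hp : SuppLE o p) :
    SuppLE o p.reverse := by
  induction p with
  | nil => trivial
  | cons p s h1 h0 ih => exact SuppLE.comp ⟨trivial, hp.2⟩ (ih hp.1)

/-- Mapping paths along a monotone map. -/
def map {L : Type u'} [PartialOrder L] (f : K →o L) {a : K} :
    {b : K} → SPath K a b → SPath L (f a) (f b)
  | _, .nil _ => .nil (f a)
  | _, .cons p s h1 h0 => .cons (map f p) (s.map f) (congrArg f h1) (congrArg f h0)

/-- The path of the nerve 1-simplex associated with an inclusion `o ≤ a`. -/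
def nervePath {o a : K} (h : o ≤ a) : SPath K o a :=
  single ⟨a, a, o, le_rfl, h⟩ rfl rfl

/-! ### Homotopy of paths -/

inductive Homotopic : {a b : K} → SPath K a b → SPath K a b → Prop
  | refl {a b : K} (p : SPath K a b) : Homotopic p p
  | symm {a b : K} {p q : SPath K a b} : Homotopic p q → Homotopic q p
  | trans {a b : K} {p q r : SPath K a b} : Homotopic p q → Homotopic q r → Homotopic p r
  | comp_congr {a b c : K} {p p' : SPath K a b} {q q' : SPath K b c} :
      Homotopic p p' → Homotopic q q' → Homotopic (p.comp q) (p'.comp q')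
  | degen {a : K} (s : Simplex1 K) (h0 : s.d0 = a) (h1 : s.d1 = a) (hs : s.supp = a) :
      Homotopic (SPath.nil a) (single s h1 h0)
  | triangle {a b : K} (c : Simplex2 K) (h1 : c.d2.d1 = a) (h0 : c.d0.d0 = b) :
      Homotopic ((single c.d2 h1 rfl).comp (single c.d0 c.h10 h0))
        (single c.d1 (c.h11.trans h1) (c.h00.symm.trans h0))

theorem single_comp_op {a b : K} (s : Simplex1 K) (h1 : s.d1 = a) (h0 : s.d0 = b) :
    Homotopic ((single s h1 h0).comp (single s.op h0 h1)) (SPath.nil a) := by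
  subst h1; subst h0
  have ht := Homotopic.triangle
    (⟨s.supp, s.op, Simplex1.deg s.d1, s, le_rfl, s.le1, le_rfl, rfl, rfl, rfl⟩ : Simplex2 K)
    rfl rfl
  have hd := Homotopic.degen (K := K) (Simplex1.deg s.d1) rfl rfl rfl
  exact ht.trans hd.symm

theorem comp_reverse_self {a b : K} (p : SPath K a b) :
    Homotopic (p.comp p.reverse) (SPath.nil a) := by
  induction p with
  | nil => exact .refl _
  | cons p s h1 h0 ih =>
      show Homotopic ((p.comp (single s h1 h0)).comp ((single s.op h0 h1).comp p.reverse)) _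
      rw [comp_assoc, ← comp_assoc (single s h1 h0)]
      have h2 : Homotopic (((single s h1 h0).comp (single s.op h0 h1)).comp p.reverse)
          p.reverse := by
        have h3 := Homotopic.comp_congr (single_comp_op s h1 h0) (Homotopic.refl p.reverse)
        rwa [nil_comp] at h3
      exact (Homotopic.comp_congr (Homotopic.refl p) h2).trans ih

theorem reverse_comp_self {a b : K} (p : SPath K a b) :
    Homotopic (p.reverse.comp p) (SPath.nil b) := by
  induction p with
  | nil => exact .refl _
  | cons p s h1 h0 ih =>
      show Homotopic (((single s.op h0 h1).comp p.reverse).comp (p.comp (single s h1 h0))) _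
      rw [comp_assoc, ← comp_assoc p.reverse]
      have h2 : Homotopic ((p.reverse.comp p).comp (single s h1 h0)) (single s h1 h0) := by
        have h3 := Homotopic.comp_congr ih (Homotopic.refl (single s h1 h0))
        rwa [nil_comp] at h3
      have h4 : Homotopic ((single s.op h0 h1).comp ((p.reverse.comp p).comp (single s h1 h0)))
          ((single s.op h0 h1).comp (single s h1 h0)) :=
        Homotopic.comp_congr (Homotopic.refl _) h2
      exact h4.trans (single_comp_op s.op h0 h1)

theorem Homotopic.reverse_congr {a b : K} {p q : SPath K a b} (h : Homotopic p q) :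
    Homotopic p.reverse q.reverse := by
  have e1 : Homotopic p.reverse (p.reverse.comp (q.comp q.reverse)) :=
    Homotopic.comp_congr (Homotopic.refl p.reverse) (comp_reverse_self q).symm
  have e2 : Homotopic (p.reverse.comp (q.comp q.reverse)) ((p.reverse.comp p).comp q.reverse) := by
    rw [comp_assoc]
    exact Homotopic.comp_congr (Homotopic.refl _)
      (Homotopic.comp_congr h.symm (Homotopic.refl _))
  have e3 : Homotopic ((p.reverse.comp p).comp q.reverse) q.reverse := by
    have h3 := Homotopic.comp_congr (reverse_comp_self p) (Homotopic.refl q.reverse)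
    rwa [nil_comp] at h3
  exact (e1.trans e2).trans e3

end SPath

/-! ### The fundamental group of a poset -/

instance homotopySetoid (K : Type u) [PartialOrder K] (o : K) : Setoid (SPath K o o) where
  r := SPath.Homotopic
  iseqv := ⟨fun p => .refl p, fun h => h.symm, fun h h' => h.trans h'⟩

def Pi1 (K : Type u) [PartialOrder K] (o : K) : Type u := Quotient (homotopySetoid K o)

namespace Pi1

variable {K : Type u} [PartialOrder K] {o : K}

def mk (p : SPath K o o) : Pi1 K o := Quotient.mk _ p

instance : One (Pi1 K o) := ⟨mk (SPath.nil o)⟩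

instance : Mul (Pi1 K o) :=
  ⟨Quotient.map₂ (fun p q => q.comp p)
    (fun _ _ hp _ _ hq => SPath.Homotopic.comp_congr hq hp)⟩

instance : Inv (Pi1 K o) :=
  ⟨Quotient.map SPath.reverse (fun _ _ h => h.reverse_congr)⟩

instance : Group (Pi1 K o) where
  mul_assoc x y z := by
    refine Quotient.inductionOn₃ x y z ?_
    intro p q r
    show mk (r.comp (q.comp p)) = mk ((r.comp q).comp p)
    rw [SPath.comp_assoc]
  one_mul x := Quotient.inductionOn x fun p => rfl
  mul_one x := Quotient.inductionOn x fun p => congrArg mk (SPath.nil_comp p)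
  inv_mul_cancel x := Quotient.inductionOn x fun p => Quotient.sound (SPath.comp_reverse_self p)

end Pi1

/-! ### Nets of C*-algebras over a poset -/

open scoped ComplexOrder

variable {K : Type u} [PartialOrder K]

structure CStarNet (K : Type u) [PartialOrder K] where
  fib : K → Type v
  [cstar : ∀ o, CStarAlgebra (fib o)]
  incl : ∀ ⦃a o : K⦄, a ≤ o → (fib a →⋆ₐ[ℂ] fib o)
  incl_injective : ∀ ⦃a o : K⦄ (h : a ≤ o), Function.Injective (incl h)
  incl_comp : ∀ ⦃e a o : K⦄ (h1 : e ≤ a) (h2 : a ≤ o) (x : fib e),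
      incl h2 (incl h1 x) = incl (h1.trans h2) x

attribute [instance] CStarNet.cstar

/-- A C*-net bundle: all the inclusion maps are isomorphisms. -/
def IsCStarNetBundle (N : CStarNet.{u, v} K) : Prop :=
  ∀ ⦃a o : K⦄ (h : a ≤ o), Function.Bijective (N.incl h)

/-- Morphisms of nets over (possibly) different posets, over the poset map `f`. -/
def IsNetMorphism {K : Type u} {S : Type u'} [PartialOrder K] [PartialOrder S]
    (N : CStarNet.{u, v} K) (M : CStarNet.{u', v'} S) (f : K →o S)
    (φ : ∀ o : K, N.fib o →⋆ₐ[ℂ] M.fib (f o)) : Prop :=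
  ∀ ⦃a o : K⦄ (h : a ≤ o) (x : N.fib a), φ o (N.incl h x) = M.incl (f.monotone h) (φ a x)

/-- Morphisms of nets over the same poset (over the identity of the poset). -/
def IsNetMorphismOver (N : CStarNet.{u, v} K) (M : CStarNet.{u, v'} K)
    (φ : ∀ o : K, N.fib o →⋆ₐ[ℂ] M.fib o) : Prop :=
  ∀ ⦃a o : K⦄ (h : a ≤ o) (x : N.fib a), φ o (N.incl h x) = M.incl h (φ a x)

namespace CStarNet

def fibCast (N : CStarNet.{u, v} K) {a b : K} (h : a = b) : N.fib a ≃⋆ₐ[ℂ] N.fib b := by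
  subst h; exact StarAlgEquiv.refl ℂ _

/-- The isomorphism determined by an inclusion map of a C*-net bundle. -/
def holEquiv (N : CStarNet.{u, v} K) (hN : IsCStarNetBundle N) ⦃a o : K⦄ (h : a ≤ o) :
    N.fib a ≃⋆ₐ[ℂ] N.fib o :=
  StarAlgEquiv.ofBijective (N.incl h) (hN h)

/-- The 1-cocycle `j_b` associated with a 1-simplex `b` of the poset. -/
def hol1 (N : CStarNet.{u, v} K) (hN : IsCStarNetBundle N) (s : Simplex1 K) :
    N.fib s.d1 ≃⋆ₐ[ℂ] N.fib s.d0 :=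
  (N.holEquiv hN s.le1).trans (N.holEquiv hN s.le0).symm

/-- The extension `j_p` of the 1-cocycle from 1-simplices to paths. -/
def holPath (N : CStarNet.{u, v} K) (hN : IsCStarNetBundle N) {a : K} :
    {b : K} → SPath K a b → (N.fib a ≃⋆ₐ[ℂ] N.fib b)
  | _, .nil _ => StarAlgEquiv.refl ℂ _
  | _, .cons p s h1 h0 =>
      (holPath N hN p).trans (((N.fibCast h1.symm).trans (N.hol1 hN s)).trans (N.fibCast h0))

end CStarNet

/-- A net is trivial if it is isomorphic to a constant net bundle. -/
def IsTrivialNet (N : CStarNet.{u, v} K) : Prop :=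
  ∀ o₀ : K, ∃ τ : ∀ a, N.fib a ≃⋆ₐ[ℂ] N.fib o₀,
    ∀ ⦃a o : K⦄ (h : a ≤ o) (x : N.fib a), τ o (N.incl h x) = τ a x

/-- `(NB, ε)` is an enveloping net bundle of the net `N`. -/
def IsEnvelope (N : CStarNet.{u, v} K) (NB : CStarNet.{u, max u v} K)
    (ε : ∀ o, N.fib o →⋆ₐ[ℂ] NB.fib o) : Prop :=
  IsCStarNetBundle NB ∧ IsNetMorphismOver N NB ε ∧
    ∀ (M : CStarNet.{u, max u v} K), IsCStarNetBundle M →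
      ∀ ψ : ∀ o, N.fib o →⋆ₐ[ℂ] M.fib o, IsNetMorphismOver N M ψ →
        ∃! ψu : ∀ o, NB.fib o →⋆ₐ[ℂ] M.fib o,
          IsNetMorphismOver NB M ψu ∧ ∀ o x, ψu o (ε o x) = ψ o x

/-- The net `N` is nondegenerate w.r.t. the enveloping net bundle `NB`. -/
def IsNondegenerate (NB : CStarNet.{u, v'} K) : Prop :=
  ∀ o : K, Nontrivial (NB.fib o)

/-! ### States -/

/-- A state on a unital C*-algebra. -/
structure CStarAlgState (A : Type v) [CStarAlgebra A] where
  lin : A →ₗ[ℂ] ℂ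
  map_one : lin 1 = 1
  pos : ∀ a : A, 0 ≤ lin (star a * a)

/-- A state on a net of C*-algebras. -/
structure NetState (N : CStarNet.{u, v} K) where
  st : ∀ o, CStarAlgState (N.fib o)
  compat : ∀ ⦃o a : K⦄ (h : o ≤ a) (x : N.fib o), (st a).lin (N.incl h x) = (st o).lin x

/-! ### Representations -/

structure NetRep (N : CStarNet.{u, v} K) where
  H : K → Type w
  [nacg : ∀ o, NormedAddCommGroup (H o)]
  [ips : ∀ o, InnerProductSpace ℂ (H o)]
  [cpl : ∀ o, CompleteSpace (H o)]
  rep : ∀ o, N.fib o →⋆ₐ[ℂ] (H o →L[ℂ] H o)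
  U : ∀ ⦃o a : K⦄, o ≤ a → (H o ≃ₗᵢ[ℂ] H a)
  intertwine : ∀ ⦃o a : K⦄ (h : o ≤ a) (x : N.fib o) (v : H o),
      U h (rep o x v) = rep a (N.incl h x) (U h v)
  U_comp : ∀ ⦃o a e : K⦄ (h1 : o ≤ a) (h2 : a ≤ e) (v : H o),
      U h2 (U h1 v) = U (h1.trans h2) v

attribute [instance] NetRep.nacg NetRep.ips NetRep.cpl

namespace NetRep

variable {N : CStarNet.{u, v} K}

def hCast (R : NetRep.{u, v, w} N) {a b : K} (h : a = b) : R.H a ≃ₗᵢ[ℂ] R.H b := by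
  subst h; exact LinearIsometryEquiv.refl ℂ _

/-- The unitary `U_b` associated with a 1-simplex `b`. -/
def U1 (R : NetRep.{u, v, w} N) (s : Simplex1 K) : R.H s.d1 ≃ₗᵢ[ℂ] R.H s.d0 :=
  (R.U s.le1).trans (R.U s.le0).symm

/-- The unitary `U_p` associated with a path `p`. -/
def Upath (R : NetRep.{u, v, w} N) {a : K} : {b : K} → SPath K a b → (R.H a ≃ₗᵢ[ℂ] R.H b)
  | _, .nil _ => LinearIsometryEquiv.refl ℂ _
  | _, .cons p s h1 h0 =>
      (Upath R p).trans (((R.hCast h1.symm).trans (R.U1 s)).trans (R.hCast h0))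

/-- A representation is faithful if all the `π_o` are injective. -/
def Faithful (R : NetRep.{u, v, w} N) : Prop := ∀ o, Function.Injective (R.rep o)

/-- A representation vanishes if all the `π_o` are zero. -/
def Vanishes (R : NetRep.{u, v, w} N) : Prop := ∀ (o) (x : N.fib o), R.rep o x = 0

/-- Quasi (topologically) trivial representation: the loop unitaries commute with the
representation of the corresponding fibre. -/
def QuasiTrivial (R : NetRep.{u, v, w} N) : Prop :=
  ∀ (o : K) (p : SPath K o o) (x : N.fib o) (v : R.H o),
    R.Upath p (R.rep o x v) = R.rep o x (R.Upath p v)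

/-- Unitary equivalence of representations. -/
def Equiv (R : NetRep.{u, v, w} N) (R' : NetRep.{u, v, w'} N) : Prop :=
  ∃ T : ∀ o, R.H o ≃ₗᵢ[ℂ] R'.H o,
    (∀ (o) (x : N.fib o) (v : R.H o), T o (R.rep o x v) = R'.rep o x (T o v)) ∧
    (∀ ⦃o a : K⦄ (h : o ≤ a) (v : R.H o), T a (R.U h v) = R'.U h (T o v))

end NetRep

/-- The representation of `N` obtained by composing a representation of `NB` with
a morphism `ε : N → NB` of nets over `K`. -/
def NetRep.ofEnvelope {N : CStarNet.{u, v} K} {NB : CStarNet.{u, v'} K}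
    (ε : ∀ o, N.fib o →⋆ₐ[ℂ] NB.fib o) (hε : IsNetMorphismOver N NB ε)
    (R : NetRep.{u, v', w} NB) : NetRep.{u, v, w} N where
  H := R.H
  rep o := (R.rep o).comp (ε o)
  U := R.U
  intertwine := by
    intro o a h x v
    show R.U h (R.rep o (ε o x) v) = R.rep a (ε a (N.incl h x)) (R.U h v)
    rw [hε h x]
    exact R.intertwine h (ε o x) v
  U_comp := R.U_comp

/-- Covariant representations of the holonomy dynamical system of a C*-net bundle,
with the action of the fundamental group presented at the level of loops. -/
structure CovRep (N : CStarNet.{u, v} K) (hN : IsCStarNetBundle N) (o : K) where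
  H : Type w
  [nacg : NormedAddCommGroup H]
  [ips : InnerProductSpace ℂ H]
  [cpl : CompleteSpace H]
  eta : N.fib o →⋆ₐ[ℂ] (H →L[ℂ] H)
  V : SPath K o o → (H ≃ₗᵢ[ℂ] H)
  V_hom : ∀ p q : SPath K o o, SPath.Homotopic p q → V p = V q
  V_mul : ∀ p q : SPath K o o, V (p.comp q) = (V p).trans (V q)
  cov : ∀ (p : SPath K o o) (x : N.fib o) (v : H),
      eta (N.holPath hN p x) (V p v) = V p (eta x v)

attribute [instance] CovRep.nacg CovRep.ips CovRep.cpl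

/-- Equivalence of covariant representations. -/
def CovRep.Equiv {N : CStarNet.{u, v} K} {hN : IsCStarNetBundle N} {o : K}
    (C : CovRep.{u, v, w} N hN o) (C' : CovRep.{u, v, w'} N hN o) : Prop :=
  ∃ W : C.H ≃ₗᵢ[ℂ] C'.H,
    (∀ (x : N.fib o) (v : C.H), W (C.eta x v) = C'.eta x (W v)) ∧
    (∀ (p : SPath K o o) (v : C.H), W (C.V p v) = C'.V p (W v))

/-- A representation of a single C*-algebra on a Hilbert space. -/
structure AlgRep (A : Type v) [CStarAlgebra A] where
  H : Type w
  [nacg : NormedAddCommGroup H]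
  [ips : InnerProductSpace ℂ H]
  [cpl : CompleteSpace H]
  rho : A →⋆ₐ[ℂ] (H →L[ℂ] H)

attribute [instance] AlgRep.nacg AlgRep.ips AlgRep.cpl

/-- A Hilbert space representation (on a single Hilbert space) of the restriction of
a net of C*-algebras to a subset `P` of the poset. -/
structure SubNetHSRep (N : CStarNet.{u, v} K) (P : Set K) where
  H : Type w
  [nacg : NormedAddCommGroup H]
  [ips : InnerProductSpace ℂ H]
  [cpl : CompleteSpace H]
  rep : ∀ o ∈ P, N.fib o →⋆ₐ[ℂ] (H →L[ℂ] H)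
  compat : ∀ ⦃a o : K⦄ (ha : a ∈ P) (ho : o ∈ P) (h : a ≤ o) (x : N.fib a),
      rep o ho (N.incl h x) = rep a ha x

attribute [instance] SubNetHSRep.nacg SubNetHSRep.ips SubNetHSRep.cpl

/-! ### Amenability -/

/-- The space `ℓ∞(G)` of bounded real-valued functions on `G`. -/
def BddFuns (G : Type w) : Submodule ℝ (G → ℝ) where
  carrier := {f | ∃ C, ∀ g, |f g| ≤ C}
  add_mem' := by
    rintro f g ⟨C, hC⟩ ⟨D, hD⟩
    exact ⟨C + D, fun x => (abs_add_le _ _).trans (add_le_add (hC x) (hD x))⟩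
  zero_mem' := ⟨0, by simp⟩
  smul_mem' := by
    rintro c f ⟨C, hC⟩
    refine ⟨|c| * C, fun x => ?_⟩
    have : |c • f x| = |c| * |f x| := by simp [abs_mul]
    calc |(c • f) x| = |c| * |f x| := by simpa using this
      _ ≤ |c| * C := mul_le_mul_of_nonneg_left (hC x) (abs_nonneg c)

def BddFuns.const (G : Type w) (r : ℝ) : BddFuns G :=
  ⟨fun _ => r, ⟨|r|, fun _ => le_rfl⟩⟩

def BddFuns.rtrans {G : Type w} [Group G] (f : BddFuns G) (h : G) : BddFuns G :=
  ⟨fun g => (f : G → ℝ) (g * h), by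
    obtain ⟨C, hC⟩ := f.2
    exact ⟨C, fun g => hC (g * h)⟩⟩

/-- A right invariant mean on `ℓ∞(G)`. -/
structure RightInvariantMean (G : Type w) [Group G] where
  mean : BddFuns G →ₗ[ℝ] ℝ
  nonneg : ∀ f : BddFuns G, (∀ g, 0 ≤ (f : G → ℝ) g) → 0 ≤ mean f
  normalized : mean (BddFuns.const G 1) = 1
  rightInv : ∀ (f : BddFuns G) (h : G), mean (BddFuns.rtrans f h) = mean f

/-- Amenability of a (discrete) group. -/
def IsAmenable (G : Type w) [Group G] : Prop := Nonempty (RightInvariantMean G)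

/-! ### Covariant nets -/

/-- A `G`-covariant structure on a net of C*-algebras, where `G` acts on the poset `K`
by order preserving bijections. -/
structure CovariantNet {G : Type w} [Group G] [MulAction G K]
    (hord : ∀ (g : G) (a b : K), a ≤ b → g • a ≤ g • b) (N : CStarNet.{u, v} K) where
  act : ∀ (g : G) (o : K), N.fib o ≃⋆ₐ[ℂ] N.fib (g • o)
  act_mul : ∀ (g h : G) (o : K) (x : N.fib o),
      N.fibCast (mul_smul h g o) (act (h * g) o x) = act h (g • o) (act g o x)
  act_incl : ∀ (g : G) ⦃a o : K⦄ (hao : a ≤ o) (x : N.fib a),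
      act g o (N.incl hao x) = N.incl (hord g a o hao) (act g a x)

/-- A `G`-invariant state of a `G`-covariant net. -/
def NetState.Invariant {G : Type w} [Group G] [MulAction G K]
    {hord : ∀ (g : G) (a b : K), a ≤ b → g • a ≤ g • b} {N : CStarNet.{u, v} K}
    (α : CovariantNet hord N) (ω : NetState N) : Prop :=
  ∀ (g : G) (o : K) (x : N.fib o), (ω.st (g • o)).lin (α.act g o x) = (ω.st o).lin x

/-! ### The generalized Čech cocycle -/

/-- A 1-simplex of the simplicial set `Σ°_*(K)`: two vertices and a nonempty support
`F` lying below both of them. -/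
structure CechSimplex1 (K : Type u) [PartialOrder K] : Type u where
  F : Set K
  hne : F.Nonempty
  src : K
  tgt : K
  hsrc : ∀ a ∈ F, a ≤ src
  htgt : ∀ a ∈ F, a ≤ tgt

def CechSimplex1.swap (s : CechSimplex1 K) : CechSimplex1 K :=
  ⟨s.F, s.hne, s.tgt, s.src, s.htgt, s.hsrc⟩

/-- `A^F_o`: the C*-subalgebra of the fibre over `o` generated by the images of the
fibres over the elements of `F`. -/
def CStarNet.fibGen (N : CStarNet.{u, v} K) (F : Set K) (o : K) (hF : ∀ a ∈ F, a ≤ o) :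
    StarSubalgebra ℂ (N.fib o) :=
  (StarAlgebra.adjoin ℂ (⋃ a, ⋃ h : a ∈ F, Set.range (N.incl (hF a h)))).topologicalClosure

theorem CStarNet.mem_fibGen (N : CStarNet.{u, v} K) {F : Set K} {o : K}
    (hF : ∀ a ∈ F, a ≤ o) {a : K} (ha : a ∈ F) (x : N.fib a) :
    N.incl (hF a ha) x ∈ N.fibGen F o hF :=
  StarSubalgebra.le_topologicalClosure _
    (StarAlgebra.subset_adjoin ℂ _
      (Set.mem_iUnion.2 ⟨a, Set.mem_iUnion.2 ⟨ha, Set.mem_range_self x⟩⟩))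

/-- A generalized Čech cocycle of the net `N` defined over the collection `D` of
1-simplices of `Σ°_*(K)`. -/
structure CechCocycle (N : CStarNet.{u, v} K) (D : Set (CechSimplex1 K)) where
  zeta : ∀ s ∈ D, (N.fibGen s.F s.src s.hsrc ≃⋆ₐ[ℂ] N.fibGen s.F s.tgt s.htgt)
  compat : ∀ (s : CechSimplex1 K) (hs : s ∈ D) ⦃a : K⦄ (ha : a ∈ s.F) (x : N.fib a),
      (zeta s hs ⟨N.incl (s.hsrc a ha) x, N.mem_fibGen s.hsrc ha x⟩ : N.fib s.tgt)
        = N.incl (s.htgt a ha) x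

/-- The domain of the Čech cocycle of a net: the union of all the domains over which
a Čech cocycle of the net exists. -/
def CechDomain (N : CStarNet.{u, v} K) : Set (CechSimplex1 K) :=
  {s | ∃ D : Set (CechSimplex1 K), Nonempty (CechCocycle N D) ∧ s ∈ D}


/-- A representation of a C*-net bundle and a covariant representation of its holonomy
dynamical system correspond to each other. -/
def MatchesCov {N : CStarNet.{u, v} K} {hN : IsCStarNetBundle N} {o : K}
    (R : NetRep.{u, v, w} N) (C : CovRep.{u, v, w'} N hN o) : Prop :=
  ∃ W : R.H o ≃ₗᵢ[ℂ] C.H,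
    (∀ (x : N.fib o) (v : R.H o), W (R.rep o x v) = C.eta x (W v)) ∧
    (∀ (p : SPath K o o) (v : R.H o), W (R.Upath p v) = C.V p (W v))


/-! A state `ω` of a net bundle is invariant under the transport `j_p` along any path `p`,
so `ω_a = ω_o ∘ j_p⁻¹` for `p : o → a`; by path-connectedness `ω` is determined by `ω_o`.
Conversely, a loop-invariant state `φ` of `A_o` spreads to `a ↦ φ ∘ j_p⁻¹`: two choices of
`p : o → a` differ by a loop, and along the path of an inclusion `a ≤ b` the transport is the
inclusion itself, which gives compatibility. -/

namespace CStarAlgState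

variable {A B : Type v} [CStarAlgebra A] [CStarAlgebra B]

@[ext] theorem ext {φ ψ : CStarAlgState A} (h : φ.lin = ψ.lin) : φ = ψ := by
  cases φ; cases ψ; cases h; rfl

def comp (φ : CStarAlgState A) (f : B →⋆ₐ[ℂ] A) : CStarAlgState B where
  lin := φ.lin ∘ₗ f.toAlgHom.toLinearMap
  map_one := by simpa using φ.map_one
  pos b := by
    show 0 ≤ φ.lin (f (star b * b))
    rw [map_mul, map_star]
    exact φ.pos (f b)

end CStarAlgState

namespace CStarNet

variable (N : CStarNet.{u, v} K) (hN : IsCStarNetBundle N)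

theorem incl_refl (a : K) (x : N.fib a) : N.incl le_rfl x = x :=
  N.incl_injective le_rfl (by rw [N.incl_comp])

theorem incl_hol1 (s : Simplex1 K) (x : N.fib s.d1) :
    N.incl s.le0 (N.hol1 hN s x) = N.incl s.le1 x :=
  (N.holEquiv hN s.le0).apply_symm_apply _

theorem hol1_op_hol1 (s : Simplex1 K) (x : N.fib s.d1) :
    N.hol1 hN s.op (N.hol1 hN s x) = x :=
  (N.holEquiv hN s.le1).symm_apply_eq.2 ((N.holEquiv hN s.le0).apply_symm_apply _)

theorem holPath_comp {a b c : K} (p : SPath K a b) (q : SPath K b c) (x : N.fib a) :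
    N.holPath hN (p.comp q) x = N.holPath hN q (N.holPath hN p x) := by
  induction q with
  | nil => rfl
  | cons q s h1 h0 ih =>
      show (((N.fibCast h1.symm).trans (N.hol1 hN s)).trans (N.fibCast h0))
          (N.holPath hN (p.comp q) x) = _
      rw [ih]; rfl

theorem holPath_reverse_holPath {a b : K} (p : SPath K a b) (x : N.fib a) :
    N.holPath hN p.reverse (N.holPath hN p x) = x := by
  induction p with
  | nil => rfl
  | cons p s h1 h0 ih =>
      subst h1 h0
      rw [SPath.reverse, holPath_comp]
      show N.holPath hN p.reverse (N.hol1 hN s.op (N.hol1 hN s (N.holPath hN p x))) = x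
      rw [hol1_op_hol1, ih]

theorem holPath_reverse {a b : K} (p : SPath K a b) :
    N.holPath hN p.reverse = (N.holPath hN p).symm := by
  ext y
  obtain ⟨x, rfl⟩ := (N.holPath hN p).surjective y
  exact (N.holPath_reverse_holPath hN p x).trans ((N.holPath hN p).symm_apply_apply x).symm

theorem holPath_nervePath {a b : K} (h : a ≤ b) (x : N.fib a) :
    N.holPath hN (SPath.nervePath h) x = N.incl h x := by
  show (N.holEquiv hN le_rfl).symm (N.holEquiv hN h x) = N.incl h x
  rw [StarAlgEquiv.symm_apply_eq]
  exact (N.incl_refl _ _).symm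

end CStarNet

namespace NetState

variable {N : CStarNet.{u, v} K}

@[ext] theorem ext {ω ω' : NetState N} (h : ω.st = ω'.st) : ω = ω' := by
  cases ω; cases ω'; cases h; rfl

theorem lin_holPath (hN : IsCStarNetBundle N) (ω : NetState N) {a b : K} (p : SPath K a b)
    (x : N.fib a) : (ω.st b).lin (N.holPath hN p x) = (ω.st a).lin x := by
  induction p with
  | nil => rfl
  | cons p s h1 h0 ih =>
      subst h1 h0
      show (ω.st s.d0).lin (N.hol1 hN s (N.holPath hN p x)) = _
      rw [← ω.compat s.le0, N.incl_hol1, ω.compat s.le1, ih]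

theorem st_eq_comp_holPath_symm (hN : IsCStarNetBundle N) (ω : NetState N) {a b : K}
    (p : SPath K a b) : ω.st b = (ω.st a).comp (N.holPath hN p).symm.toStarAlgHom := by
  ext y
  conv_lhs => rw [← (N.holPath hN p).apply_symm_apply y]
  exact ω.lin_holPath hN p _

end NetState

section LoopInvariant

variable {N : CStarNet.{u, v} K} (hN : IsCStarNetBundle N) {o : K}
  {φ : CStarAlgState (N.fib o)}
  (hφ : ∀ (p : SPath K o o) (x : N.fib o), φ.lin (N.holPath hN p x) = φ.lin x)
include hφ

theorem comp_holPath_symm_eq_of_loop_invariant {a : K} (q r : SPath K o a) :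
    φ.comp (N.holPath hN q).symm.toStarAlgHom = φ.comp (N.holPath hN r).symm.toStarAlgHom := by
  ext z
  have hloop := hφ (r.comp q.reverse) ((N.holPath hN r).symm z)
  rwa [N.holPath_comp, N.holPath_reverse, StarAlgEquiv.apply_symm_apply] at hloop

def NetState.ofLoopInvariant (path : ∀ a, SPath K o a) : NetState N where
  st a := φ.comp (N.holPath hN (path a)).symm.toStarAlgHom
  compat a b h x := by
    have hx : (N.holPath hN ((path a).comp (.nervePath h))).symm (N.incl h x)
        = (N.holPath hN (path a)).symm x := by
      rw [StarAlgEquiv.symm_apply_eq, N.holPath_comp, StarAlgEquiv.apply_symm_apply,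
        N.holPath_nervePath]
    rw [comp_holPath_symm_eq_of_loop_invariant hN hφ (path b) ((path a).comp (.nervePath h))]
    exact congrArg φ.lin hx

theorem NetState.ofLoopInvariant_st_self (path : ∀ a, SPath K o a) :
    (NetState.ofLoopInvariant hN hφ path).st o = φ := by
  show φ.comp _ = φ
  rw [comp_holPath_symm_eq_of_loop_invariant hN hφ _ (.nil o)]
  rfl

end LoopInvariant

/-- the map `ω ↦ ω_o` is a bijection from the set of states of a C*-net
bundle onto the set of invariant states of its holonomy dynamical system. -/
theorem statement_7 {K : Type u} [PartialOrder K]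
    (hconn : ∀ a b : K, Nonempty (SPath K a b)) (o : K)
    (N : CStarNet.{u, v} K) (hN : IsCStarNetBundle N) :
    (∀ (ω : NetState N) (p : SPath K o o) (x : N.fib o),
        (ω.st o).lin (N.holPath hN p x) = (ω.st o).lin x) ∧
    (∀ ω ω' : NetState N, ω.st o = ω'.st o → ω = ω') ∧
    (∀ φ : CStarAlgState (N.fib o),
        (∀ (p : SPath K o o) (x : N.fib o), φ.lin (N.holPath hN p x) = φ.lin x) →
        ∃ ω : NetState N, ω.st o = φ) := by
  refine ⟨fun ω => ω.lin_holPath hN, fun ω ω' h => ?_, fun φ hφ => ?_⟩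
  · ext1; funext a
    obtain ⟨p⟩ := hconn o a
    rw [ω.st_eq_comp_holPath_symm hN p, ω'.st_eq_comp_holPath_symm hN p, h]
  · exact ⟨_, NetState.ofLoopInvariant_st_self hN hφ fun a => (hconn o a).some⟩

end AQFT
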